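/- For neighboring runs F, F' with equal period p and equal Lyndon roots, there is at most one layer R of the pyramid P(F,F') that is not contained strictly inside F ∪ F' (i.e., at most one layer containing the first position of F or the last position of F'). -/

import Mathlib

open List

variable {α : Type*}

/-- `frag T a b` is the fragment `T[a..b]` (inclusive, 0-based). -/
def frag (T : List α) (a b : ℕ) : List α := (T.drop a).take (b + 1 - a)

/-- `p` is a period of `S`: `0 < p ≤ |S|` and `S[i] = S[i+p]` for all valid `i`. -/
def IsPeriodOf (p : ℕ) (S : List α) : Prop :=
  0 < p ∧ p ≤ S.length ∧ ∀ i : ℕ, i + p < S.length → S[i]? = S[i + p]?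

/-- The smallest period of `S`. -/
noncomputable def minPeriod (S : List α) : ℕ := sInf {p | IsPeriodOf p S}

/-- `T[a..b]` is a run: periodic (its smallest period occurs at least twice)
and maximal on both sides. -/
def IsRun (T : List α) (a b : ℕ) : Prop :=
  a ≤ b ∧ b < T.length ∧
  2 * minPeriod (frag T a b) ≤ b + 1 - a ∧
  (a = 0 ∨ T[a - 1]? ≠ T[a - 1 + minPeriod (frag T a b)]?) ∧
  (b = T.length - 1 ∨ T[b + 1]? ≠ T[b + 1 - minPeriod (frag T a b)]?)

/-- `W` occurs in `T` at position `s`. -/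
def OccursAt (T : List α) (s : ℕ) (W : List α) : Prop :=
  s + W.length ≤ T.length ∧ (T.drop s).take W.length = W

/-- The set of distinct square substrings of `T`. -/
def Squares (T : List α) : Set (List α) :=
  {W | ∃ X : List α, X ≠ [] ∧ W = X ++ X ∧ W <:+: T}

/-- A non-empty string is primitive if it is not a proper power. -/
def Primitive (U : List α) : Prop :=
  U ≠ [] ∧ ∀ (V : List α) (k : ℕ), U = (List.replicate k V).flatten → k = 1

/-- Cyclic rotation moving the first `c` characters to the end. -/
def rot (c : ℕ) (L : List α) : List α := L.drop c ++ L.take c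

/-- `lam` is the Lyndon root of a periodic string `S`: the lexicographically
smallest rotation of `S[0..per(S))`. -/
def LyndonRootOf [LinearOrder α] (S lam : List α) : Prop :=
  (∃ c < minPeriod S, lam = rot c (S.take (minPeriod S))) ∧
  ∀ c < minPeriod S, lam ≤ rot c (S.take (minPeriod S))

/-- Squares generated by a periodic string `U`: squares contained in `U`
whose smallest period equals that of `U`. -/
def FragSquares (U : List α) : Set (List α) :=
  {W | ∃ X : List α, X ≠ [] ∧ W = X ++ X ∧ W <:+: U ∧ minPeriod W = minPeriod U}

/-- `subper U`: the minimum of `per(X)` over squares `X²` generated by `U`. -/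
noncomputable def subper (U : List α) : ℕ :=
  sInf {q | ∃ X : List α, X ≠ [] ∧ (X ++ X) <:+: U ∧
    minPeriod (X ++ X) = minPeriod U ∧ minPeriod X = q}

/-- Fragments `[a..b]` and `[a'..b']` are neighboring:
`[a-1..b+1] ∩ [a'..b'] ≠ ∅`. -/
def Neighboring (a b a' b' : ℕ) : Prop := a ≤ b' + 1 ∧ a' ≤ b + 1

/-- `T[x..y]` is a layer of the pyramid of the neighboring runs
`F = T[a..b]` and `F' = T[a'..b']` (with `a < a'`): a subperiodic run `R`
with `subper(R) = per(F)` such that `R ∩ (F ∪ F')` is periodic with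
period `per(R)`. -/
def IsLayer (T : List α) (a b a' b' x y : ℕ) : Prop :=
  IsRun T x y ∧
  4 * subper (frag T x y) ≤ minPeriod (frag T x y) ∧
  subper (frag T x y) = minPeriod (frag T a b) ∧
  2 * minPeriod (frag T x y) ≤ min y b' + 1 - max x a ∧
  IsPeriodOf (minPeriod (frag T x y)) (frag T (max x a) (min y b'))

/-- A `τ`-synchronizing set of `T` (Kempa–Kociumaka): consistency and density. -/
def SyncSet (T : List α) (τ : ℕ) (S : Set ℕ) : Prop :=
  (∀ i ∈ S, i + 2 * τ ≤ T.length) ∧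
  (∀ i j : ℕ, i + 2 * τ ≤ T.length → j + 2 * τ ≤ T.length →
    (T.drop i).take (2 * τ) = (T.drop j).take (2 * τ) → (i ∈ S ↔ j ∈ S)) ∧
  (∀ i : ℕ, i + 3 * τ - 1 ≤ T.length →
    ((∀ k ∈ S, k < i ∨ i + τ ≤ k) ↔
      3 * minPeriod ((T.drop i).take (3 * τ - 1)) ≤ τ))

/-!
A layer `R = T[x..y]` has period `q ≥ 4p` and meets `F ∪ F' = T[a..b']` in a `q`-periodic window
`I` of length at least `2q`. By minimality of the periods, `I` sticks out of both `F` and `F'`,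
and it starts at most `q` before `a'`; so two layers of equal period overlap by at least `q`,
and two runs of equal period overlapping that much coincide.

It remains to show that non-regular layers have equal periods. The mismatches at `b + 1` and
`a' - 1` that end `F` and start `F'` pin the period down: a layer containing `a` has
`q ≤ b + 1 - a < q + p`, and one containing `b'` has `q ≤ b' + 1 - a' < q + p`.
If two such layers have periods `q < q₁`, then `q₁ - q` is a period of a window of `F` or `F'`
of length at least `p + (q₁ - q)`, so by Fine–Wilf `p ∣ q₁ - q`. The bounds force `q₁ - q < p`,
except when one layer contains `a` and the other `b'`; there `q₁ - q = p` is also possible, and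
it contradicts the mismatch at `b + 1`.
-/

def PerOn (T : List α) (u w r : ℕ) : Prop :=
  ∀ i : ℕ, u ≤ i → i + r ≤ w → T[i]? = T[i + r]?

namespace PerOn

variable {T : List α} {u w r g s m e q d u₁ w₁ : ℕ}

theorem mono (h : PerOn T u w r) (hu : u ≤ s) (hw : m ≤ w) : PerOn T s m r :=
  fun i hi hir => h i (hu.trans hi) (hir.trans hw)

theorem extend_left (big : PerOn T u w r) (win : PerOn T s m g) (hr : 0 < r) (hmw : m ≤ w)
    (hlen : s + r + g ≤ m + 1) : PerOn T u m g := by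
  suffices ∀ n i, s ≤ i + n → u ≤ i → i + g ≤ m → T[i]? = T[i + g]? from
    fun i hu hg => this s i (by omega) hu hg
  intro n
  induction n with
  | zero => exact fun i hs _ hg => win i (by omega) hg
  | succ n ih =>
    intro i hs hu hg
    by_cases hsi : s ≤ i
    · exact win i hsi hg
    calc T[i]? = T[i + r]? := big i hu (by omega)
      _ = T[i + r + g]? := ih (i + r) (by omega) (by omega) (by omega)
      _ = T[i + g]? := by
        rw [add_right_comm]; exact (big (i + g) (by omega) (by omega)).symm

theorem extend_right (big : PerOn T u w r) (win : PerOn T s m g) (hr : 0 < r) (hus : u ≤ s)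
    (hlen : s + r + g ≤ m + 1) : PerOn T s w g := by
  suffices ∀ n i, i + g ≤ m + n → s ≤ i → i + g ≤ w → T[i]? = T[i + g]? from
    fun i hs hg => this w i (by omega) hs hg
  intro n
  induction n with
  | zero => exact fun i hm hs _ => win i hs (by omega)
  | succ n ih =>
    intro i hm hs hg
    by_cases him : i + g ≤ m
    · exact win i hs him
    obtain ⟨j, rfl⟩ : ∃ j, i = j + r := ⟨i - r, by omega⟩
    calc T[j + r]? = T[j]? := (big j (by omega) (by omega)).symm
      _ = T[j + g]? := ih j (by omega) (by omega) (by omega)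
      _ = T[j + r + g]? := by rw [add_right_comm]; exact big (j + g) (by omega) (by omega)

theorem extend (big : PerOn T u w r) (win : PerOn T s m g) (hr : 0 < r) (hus : u ≤ s)
    (hmw : m ≤ w) (hlen : s + r + g ≤ m + 1) : PerOn T u w g :=
  big.extend_right (big.extend_left win hr hmw hlen) hr le_rfl (by omega)

theorem of_add_above (h : PerOn T u w q) (h₁ : PerOn T u₁ w₁ (q + d)) (hu : u ≤ s)
    (hu₁ : u₁ ≤ s) (hw : e + q ≤ w) (hw₁ : e + q ≤ w₁) : PerOn T s e d := by
  intro j hj hje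
  calc T[j]? = T[j + (q + d)]? := h₁ j (by omega) (by omega)
    _ = T[j + d]? := by
      rw [← add_assoc, add_right_comm]; exact (h (j + d) (by omega) (by omega)).symm

theorem of_add_below (h : PerOn T u w q) (h₁ : PerOn T u₁ w₁ (q + d)) (hu : u + q ≤ s)
    (hu₁ : u₁ + q ≤ s) (hw : e ≤ w) (hw₁ : e ≤ w₁) : PerOn T s e d := by
  intro j hj hje
  obtain ⟨i, rfl⟩ : ∃ i, j = i + q := ⟨j - q, by omega⟩
  calc T[i + q]? = T[i]? := (h i (by omega) (by omega)).symm
    _ = T[i + q + d]? := by rw [add_assoc]; exact h₁ i (by omega) (by omega)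

/-- The Fine–Wilf periodicity lemma, in the weak form for windows of length at least `P + Q`. -/
theorem gcd {P Q : ℕ} (hP : PerOn T u w P) (hQ : PerOn T u w Q) (hP0 : 0 < P) (hQ0 : 0 < Q)
    (hlen : u + P + Q ≤ w + 1) : PerOn T u w (Nat.gcd P Q) := by
  induction hn : P + Q using Nat.strong_induction_on generalizing P Q w with
  | _ n ih =>
    wlog hPQ : P ≤ Q generalizing P Q
    · rw [Nat.gcd_comm]
      exact this hQ hP hQ0 hP0 (by omega) (by omega) (by omega)
    obtain ⟨d, rfl⟩ : ∃ d, Q = P + d := ⟨Q - P, by omega⟩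
    rcases Nat.eq_zero_or_pos d with rfl | hd
    · simpa using hP
    have hPd : PerOn T u (w - P) d := hP.of_add_above hQ le_rfl le_rfl (by omega) (by omega)
    have hg := ih (P + d) (by omega) (hP.mono le_rfl (Nat.sub_le w P)) hPd hP0 hd (by omega) rfl
    have hgd : Nat.gcd P d ≤ d := Nat.le_of_dvd hd (Nat.gcd_dvd_right P d)
    rw [Nat.gcd_self_add_right]
    exact hP.extend hg hP0 le_rfl (Nat.sub_le w P) (by omega)

end PerOn

section Fragments

variable {T : List α} {u w r j : ℕ}

theorem frag_length (hw : w < T.length) : (frag T u w).length = w + 1 - u := by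
  simp only [frag, length_take, length_drop]
  omega

theorem getElem?_frag (hj : j < w + 1 - u) : (frag T u w)[j]? = T[u + j]? := by
  rw [frag, getElem?_take_of_lt hj, getElem?_drop]

theorem isPeriodOf_frag_iff (hw : w < T.length) :
    IsPeriodOf r (frag T u w) ↔ 0 < r ∧ r ≤ w + 1 - u ∧ PerOn T u w r := by
  unfold IsPeriodOf
  rw [frag_length hw]
  refine and_congr_right fun _ => and_congr_right fun _ => ⟨fun h i hi hir => ?_, fun h i hi => ?_⟩
  · have := h (i - u) (by omega)
    rwa [getElem?_frag (by omega), getElem?_frag (by omega), Nat.add_sub_cancel' hi,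
      ← add_assoc, Nat.add_sub_cancel' hi] at this
  · rw [getElem?_frag (by omega), getElem?_frag (by omega), ← add_assoc]
    exact h (u + i) (by omega) (by omega)

end Fragments

theorem minPeriod_isPeriodOf {S : List α} (h : S ≠ []) : IsPeriodOf (minPeriod S) S :=
  Nat.sInf_mem (s := {p | IsPeriodOf p S})
    ⟨S.length, length_pos_iff.2 h, le_rfl, fun _ hi => absurd hi (by omega)⟩

theorem minPeriod_le {S : List α} {r : ℕ} (h : IsPeriodOf r S) : minPeriod S ≤ r :=
  Nat.sInf_le h

structure IsRunOn (T : List α) (u w p : ℕ) : Prop where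
  le : u ≤ w
  lt_length : w < T.length
  pos : 0 < p
  two_mul_le : 2 * p ≤ w + 1 - u
  perOn : PerOn T u w p
  minimal : ∀ r, 0 < r → r ≤ w + 1 - u → PerOn T u w r → p ≤ r
  left_maximal : u = 0 ∨ T[u - 1]? ≠ T[u - 1 + p]?
  right_maximal : w = T.length - 1 ∨ T[w + 1]? ≠ T[w + 1 - p]?

theorem IsRun.isRunOn {T : List α} {u w : ℕ} (h : IsRun T u w) :
    IsRunOn T u w (minPeriod (frag T u w)) := by
  obtain ⟨huw, hw, h2, hl, hr⟩ := h
  have hne : frag T u w ≠ [] := by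
    rw [← length_pos_iff, frag_length hw]
    omega
  obtain ⟨hp, -, hper⟩ := (isPeriodOf_frag_iff hw).1 (minPeriod_isPeriodOf hne)
  exact ⟨huw, hw, hp, h2, hper,
    fun r hr hle hr' => minPeriod_le ((isPeriodOf_frag_iff hw).2 ⟨hr, hle, hr'⟩), hl, hr⟩

namespace IsRunOn

variable {T : List α} {u w p s m r d u₁ w₁ : ℕ}

theorem le_of_perOn_window (h : IsRunOn T u w p) (hs : PerOn T s m r) (hr : 0 < r) (hus : u ≤ s)
    (hmw : m ≤ w) (hlen : s + p + r ≤ m + 1) : p ≤ r :=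
  h.minimal r hr (by omega) (h.perOn.extend hs h.pos hus hmw hlen)

theorem dvd_of_perOn_window (h : IsRunOn T u w p) (hs : PerOn T s m d) (hd : 0 < d)
    (hus : u ≤ s) (hmw : m ≤ w) (hlen : s + d + p ≤ m + 1) : p ∣ d := by
  have hg := (h.perOn.mono hus hmw).gcd hs h.pos hd (by omega)
  have hgd : Nat.gcd p d ≤ d := Nat.le_of_dvd hd (Nat.gcd_dvd_right p d)
  have hpg := h.le_of_perOn_window hg (Nat.gcd_pos_of_pos_left d h.pos) hus hmw (by omega)
  exact Nat.gcd_eq_left_iff_dvd.1 (le_antisymm (Nat.le_of_dvd h.pos (Nat.gcd_dvd_left p d)) hpg)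

theorem getElem?_pred_ne (h : IsRunOn T u w p) (hu : 0 < u) : T[u - 1]? ≠ T[u - 1 + p]? :=
  h.left_maximal.resolve_left hu.ne'

theorem getElem?_succ_ne (h : IsRunOn T u w p) (hw : w + 1 < T.length) :
    T[w + 1]? ≠ T[w + 1 - p]? :=
  h.right_maximal.resolve_left (by omega)

theorem le_of_overlap (h : IsRunOn T u w p) (h₁ : IsRunOn T u₁ w₁ p) (hov : u₁ + p ≤ w + 1) :
    u₁ ≤ u ∧ w₁ ≤ w := by
  constructor
  · by_contra! hlt
    exact h₁.getElem?_pred_ne (by omega) (h.perOn (u₁ - 1) (by omega) (by omega))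
  · by_contra! hlt
    have hw := h₁.perOn (w + 1 - p) (by omega) (by omega)
    rw [Nat.sub_add_cancel (by omega)] at hw
    exact h.getElem?_succ_ne (by have := h₁.lt_length; omega) hw.symm

theorem eq_of_overlap (h : IsRunOn T u w p) (h₁ : IsRunOn T u₁ w₁ p) (hov : u₁ + p ≤ w + 1)
    (hov₁ : u + p ≤ w₁ + 1) : u = u₁ ∧ w = w₁ := by
  have := h.le_of_overlap h₁ hov
  have := h₁.le_of_overlap h hov₁
  omega

end IsRunOn

structure NeighboringRuns (T : List α) (a b a' b' p : ℕ) : Prop where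
  left : IsRunOn T a b p
  right : IsRunOn T a' b' p
  lt : a < a'
  le_succ : a' ≤ b + 1

/-- `T[max x a..min y b']` is the intersection of the layer `T[x..y]` with `F ∪ F' = T[a..b']`. -/
structure IsLayerOn (T : List α) (a b' p x y q : ℕ) : Prop where
  run : IsRunOn T x y q
  four_mul_le : 4 * p ≤ q
  two_mul_le : 2 * q ≤ min y b' + 1 - max x a
  perOn : PerOn T (max x a) (min y b') q

theorem IsLayer.isLayerOn {T : List α} {a b a' b' p x y : ℕ}
    (hp : minPeriod (frag T a b) = p) (h : IsLayer T a b a' b' x y) :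
    IsLayerOn T a b' p x y (minPeriod (frag T x y)) := by
  obtain ⟨hR, h4, hsub, h2, hI⟩ := h
  have hR' := hR.isRunOn
  rw [hsub, hp] at h4
  have hlt : min y b' < T.length := (min_le_left y b').trans_lt hR'.lt_length
  exact ⟨hR', h4, h2, ((isPeriodOf_frag_iff hlt).1 hI).2.2⟩

namespace IsLayerOn

variable {T : List α} {a b a' b' p x y q x₁ y₁ q₁ : ℕ}

theorem lt_inter_end (hF : NeighboringRuns T a b a' b' p) (hL : IsLayerOn T a b' p x y q) :
    b < min y b' := by
  by_contra! hle
  have := hL.two_mul_le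
  have := hL.four_mul_le
  have := hF.left.pos
  have := hL.run.le_of_perOn_window (hF.left.perOn.mono (le_max_right x a) hle) hF.left.pos
    (le_max_left x a) (min_le_left y b') (by omega)
  omega

theorem inter_start_lt (hF : NeighboringRuns T a b a' b' p) (hL : IsLayerOn T a b' p x y q) :
    max x a < a' := by
  by_contra! hle
  have := hL.two_mul_le
  have := hL.four_mul_le
  have := hF.right.pos
  have := hL.run.le_of_perOn_window (hF.right.perOn.mono hle (min_le_right y b')) hF.right.pos
    (le_max_left x a) (min_le_left y b') (by omega)
  omega

theorem le_inter_start_add (hF : NeighboringRuns T a b a' b' p) (hL : IsLayerOn T a b' p x y q) :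
    a' ≤ max x a + q := by
  by_contra! hlt
  have := hL.lt_inter_end hF
  have := hL.two_mul_le
  have := hL.four_mul_le
  have := hF.le_succ
  have := hF.left.pos
  -- Either `q + p` positions of `I` lie in `F`, making `p` a period of the layer, or the
  -- mismatch at `a' - 1` would be copied from position `a' - 1 - q`, which lies in `F`.
  by_cases hbig : max x a + q + p ≤ a'
  · have := hL.run.le_of_perOn_window
      (hF.left.perOn.mono (le_max_right x a) (by omega : a' - 1 ≤ b))
      hF.left.pos (le_max_left x a) (by omega : a' - 1 ≤ y) (by omega)
    omega
  apply hF.right.getElem?_pred_ne (by omega)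
  obtain ⟨i, hi⟩ : ∃ i, a' - 1 = i + q := ⟨a' - 1 - q, by omega⟩
  rw [hi]
  calc T[i + q]? = T[i]? := (hL.perOn i (by omega) (by omega)).symm
    _ = T[i + p]? := hF.left.perOn i (by omega) (by omega)
    _ = T[i + q + p]? := by rw [add_right_comm]; exact hL.perOn (i + p) (by omega) (by omega)

theorem eq_of_period_eq (hF : NeighboringRuns T a b a' b' p) (hL : IsLayerOn T a b' p x y q)
    (hL₁ : IsLayerOn T a b' p x₁ y₁ q) : x = x₁ ∧ y = y₁ := by
  have := hL.two_mul_le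
  have := hL₁.two_mul_le
  have := hL.inter_start_lt hF
  have := hL₁.inter_start_lt hF
  have := hL.le_inter_start_add hF
  have := hL₁.le_inter_start_add hF
  exact hL.run.eq_of_overlap hL₁.run (by omega) (by omega)

theorem left_bounds (hF : NeighboringRuns T a b a' b' p) (hL : IsLayerOn T a b' p x y q)
    (hx : x ≤ a) : min y b' ≤ b + q ∧ a + q ≤ b + 1 ∧ b + 2 ≤ a + q + p := by
  have hI := hL.perOn
  have := hL.two_mul_le
  have := hL.le_inter_start_add hF
  have := hL.lt_inter_end hF
  have := hF.left.two_mul_le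
  have := hF.left.pos
  have hne := hF.left.getElem?_succ_ne (by have := hF.right.lt_length; omega)
  have h1 : min y b' ≤ b + q := by
    by_contra! h
    apply hne
    obtain ⟨i, hi⟩ : ∃ i, b + 1 = i + p := ⟨b + 1 - p, by omega⟩
    rw [hi, Nat.add_sub_cancel]
    calc T[i + p]? = T[i + p + q]? := hI (i + p) (by omega) (by omega)
      _ = T[i + q]? := by
        rw [add_right_comm]; exact (hF.right.perOn (i + q) (by omega) (by omega)).symm
      _ = T[i]? := (hI i (by omega) (by omega)).symm
  have h3 : b + 2 ≤ a + q + p := by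
    by_contra! h
    apply hne
    obtain ⟨i, hi⟩ : ∃ i, b + 1 = i + q + p := ⟨b + 1 - p - q, by omega⟩
    rw [hi, Nat.add_sub_cancel]
    calc T[i + q + p]? = T[i + p]? := by
          rw [add_right_comm]; exact (hI (i + p) (by omega) (by omega)).symm
      _ = T[i]? := (hF.left.perOn i (by omega) (by omega)).symm
      _ = T[i + q]? := hI i (by omega) (by omega)
  exact ⟨h1, by omega, h3⟩

theorem right_bounds (hF : NeighboringRuns T a b a' b' p) (hL : IsLayerOn T a b' p x y q)
    (hy : b' ≤ y) : a' + q ≤ b' + 1 ∧ b' + 2 ≤ a' + q + p := by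
  have hI := hL.perOn
  have := hL.two_mul_le
  have := hL.inter_start_lt hF
  have := hL.le_inter_start_add hF
  have h1 : a' + q ≤ b' + 1 := by omega
  refine ⟨h1, ?_⟩
  by_contra! h
  have := hL.run.pos
  apply hF.right.getElem?_pred_ne (by have := hF.lt; omega)
  calc T[a' - 1]? = T[a' - 1 + q]? := hI (a' - 1) (by omega) (by omega)
    _ = T[a' - 1 + q + p]? := hF.right.perOn (a' - 1 + q) (by omega) (by omega)
    _ = T[a' - 1 + p]? := by
      rw [add_right_comm]; exact (hI (a' - 1 + p) (by omega) (by omega)).symm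

theorem period_le_of_left_left (hF : NeighboringRuns T a b a' b' p)
    (hL : IsLayerOn T a b' p x y q) (hL₁ : IsLayerOn T a b' p x₁ y₁ q₁) (hx : x ≤ a)
    (hx₁ : x₁ ≤ a) : q₁ ≤ q := by
  by_contra! hlt
  obtain ⟨d, rfl⟩ : ∃ d, q₁ = q + d := ⟨q₁ - q, by omega⟩
  obtain ⟨-, -, hq⟩ := hL.left_bounds hF hx
  obtain ⟨-, hq₁, -⟩ := hL₁.left_bounds hF hx₁
  have := hL.two_mul_le
  have := hL₁.two_mul_le
  have := hL.four_mul_le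
  have hd : PerOn T a (a + q - 1) d :=
    hL.perOn.of_add_above hL₁.perOn (by omega) (by omega) (by omega) (by omega)
  have := Nat.le_of_dvd (by omega)
    (hF.left.dvd_of_perOn_window hd (by omega) le_rfl (by omega) (by omega))
  omega

theorem period_le_of_right_right (hF : NeighboringRuns T a b a' b' p)
    (hL : IsLayerOn T a b' p x y q) (hL₁ : IsLayerOn T a b' p x₁ y₁ q₁) (hy : b' ≤ y)
    (hy₁ : b' ≤ y₁) : q₁ ≤ q := by
  by_contra! hlt
  obtain ⟨d, rfl⟩ : ∃ d, q₁ = q + d := ⟨q₁ - q, by omega⟩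
  obtain ⟨hq, hq'⟩ := hL.right_bounds hF hy
  obtain ⟨hq₁, -⟩ := hL₁.right_bounds hF hy₁
  have := hL.two_mul_le
  have := hL₁.two_mul_le
  have := hL.four_mul_le
  have hd : PerOn T (b' + 1 - q) b' d :=
    hL.perOn.of_add_below hL₁.perOn (by omega) (by omega) (by omega) (by omega)
  have := Nat.le_of_dvd (by omega)
    (hF.right.dvd_of_perOn_window hd (by omega) (by omega) le_rfl (by omega))
  omega

theorem period_le_of_left_right (hF : NeighboringRuns T a b a' b' p)
    (hL : IsLayerOn T a b' p x y q) (hL₁ : IsLayerOn T a b' p x₁ y₁ q₁) (hx : x ≤ a)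
    (hy₁ : b' ≤ y₁) : q₁ ≤ q := by
  by_contra! hlt
  obtain ⟨d, rfl⟩ : ∃ d, q₁ = q + d := ⟨q₁ - q, by omega⟩
  have := hL.left_bounds hF hx
  have := hL₁.right_bounds hF hy₁
  have := hL.two_mul_le
  have := hL₁.two_mul_le
  have := hL.four_mul_le
  have := hL.le_inter_start_add hF
  have := hL₁.inter_start_lt hF
  have hd : PerOn T (max x₁ a) (min y b' - q) d :=
    hL.perOn.of_add_above hL₁.perOn (by omega) (by omega) (by omega) (by omega)
  have := Nat.le_of_dvd (by omega)
    (hF.left.dvd_of_perOn_window hd (by omega) (by omega) (by omega) (by omega))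
  omega

theorem period_ge_of_left_right (hF : NeighboringRuns T a b a' b' p)
    (hL : IsLayerOn T a b' p x y q) (hL₁ : IsLayerOn T a b' p x₁ y₁ q₁) (hx : x ≤ a)
    (hy₁ : b' ≤ y₁) : q ≤ q₁ := by
  by_contra! hlt
  obtain ⟨d, rfl⟩ : ∃ d, q = q₁ + d := ⟨q - q₁, by omega⟩
  have := hL.left_bounds hF hx
  have := hL₁.right_bounds hF hy₁
  have := hL.two_mul_le
  have := hL₁.two_mul_le
  have := hL₁.four_mul_le
  have := hL.lt_inter_end hF
  have := hL₁.inter_start_lt hF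
  have := hL₁.le_inter_start_add hF
  have := hF.le_succ
  have hd : PerOn T (max x₁ a + q₁) (min y b') d :=
    hL₁.perOn.of_add_below hL.perOn (by omega) (by omega) (by omega) (by omega)
  have hdvd := hF.right.dvd_of_perOn_window hd (by omega) (by omega) (by omega) (by omega)
  -- `d = p`: then `T[b + 1]` and `T[b + 1 - p]` are both `T[b + 1 + q₁]`
  obtain rfl := Nat.eq_of_dvd_of_lt_two_mul (by omega) hdvd (by omega)
  apply hF.left.getElem?_succ_ne (by have := hF.right.lt_length; omega)
  calc T[b + 1]? = T[b + 1 + q₁]? := hL₁.perOn (b + 1) (by omega) (by omega)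
    _ = T[b + 1 - d + (q₁ + d)]? := by congr 1; omega
    _ = T[b + 1 - d]? := (hL.perOn (b + 1 - d) (by omega) (by omega)).symm

theorem period_eq (hF : NeighboringRuns T a b a' b' p) (hL : IsLayerOn T a b' p x y q)
    (hL₁ : IsLayerOn T a b' p x₁ y₁ q₁) (h : x ≤ a ∨ b' ≤ y) (h₁ : x₁ ≤ a ∨ b' ≤ y₁) :
    q = q₁ := by
  rcases h with h | h <;> rcases h₁ with h₁ | h₁
  · exact le_antisymm (hL₁.period_le_of_left_left hF hL h₁ h)
      (hL.period_le_of_left_left hF hL₁ h h₁)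
  · exact le_antisymm (hL.period_ge_of_left_right hF hL₁ h h₁)
      (hL.period_le_of_left_right hF hL₁ h h₁)
  · exact le_antisymm (hL₁.period_le_of_left_right hF hL h₁ h)
      (hL₁.period_ge_of_left_right hF hL h₁ h)
  · exact le_antisymm (hL₁.period_le_of_right_right hF hL h₁ h)
      (hL.period_le_of_right_right hF hL₁ h h₁)

end IsLayerOn

theorem at_most_one_nonregular_layer_general (T : List α)
    (a b a' b' p : ℕ)
    (hab : a < a')
    (h1 : IsRun T a b) (h2 : IsRun T a' b')
    (hnb : Neighboring a b a' b')
    (hp1 : minPeriod (frag T a b) = p) (hp2 : minPeriod (frag T a' b') = p) :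
    ∀ x y x₁ y₁ : ℕ, IsLayer T a b a' b' x y → IsLayer T a b a' b' x₁ y₁ →
      ¬(a < x ∧ y < b') → ¬(a < x₁ ∧ y₁ < b') → x = x₁ ∧ y = y₁ := by
  intro x y x₁ y₁ hL hL₁ hreg hreg₁
  have hF : NeighboringRuns T a b a' b' p := ⟨hp1 ▸ h1.isRunOn, hp2 ▸ h2.isRunOn, hab, hnb.2⟩
  replace hL := hL.isLayerOn hp1
  replace hL₁ := hL₁.isLayerOn hp1
  rw [← hL.period_eq hF hL₁ (by omega) (by omega)] at hL₁
  exact hL.eq_of_period_eq hF hL₁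

/-- At most one layer of a pyramid is not strictly inside `F ∪ F'`. -/
theorem at_most_one_nonregular_layer [LinearOrder α] (T : List α)
    (a b a' b' p : ℕ) (lam : List α)
    (hab : a < a')
    (h1 : IsRun T a b) (h2 : IsRun T a' b')
    (hnb : Neighboring a b a' b')
    (hp1 : minPeriod (frag T a b) = p) (hp2 : minPeriod (frag T a' b') = p)
    (hlam1 : LyndonRootOf (frag T a b) lam)
    (hlam2 : LyndonRootOf (frag T a' b') lam) :
    ∀ x y x₁ y₁ : ℕ, IsLayer T a b a' b' x y → IsLayer T a b a' b' x₁ y₁ →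
      ¬(a < x ∧ y < b') → ¬(a < x₁ ∧ y₁ < b') → x = x₁ ∧ y = y₁ :=
  at_most_one_nonregular_layer_general T a b a' b' p hab h1 h2 hnb hp1 hp2
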